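/- Let G be a finite group, R a commutative ring, and H, K subgroups of G. Then, as an R[N_G(H)/H]-module, the free R-module R[(G/K)^H] on the H-fixed points of G/K is isomorphic to ⊕ R[N_G(H)/N_{gKg⁻¹}(H)], where the sum runs over a set v(H,K) of representatives g of the K-conjugacy classes of subgroups of the form g⁻¹Hg that are contained in K. -/

import Mathlib

open CategoryTheory CategoryTheory.Limits

namespace OrbitPaper

variable {G : Type} [Group G]

/-- The conjugate subgroup `gKg⁻¹`. -/
def conjSub (g : G) (K : Subgroup G) : Subgroup G :=
  K.map (MulAut.conj g).toMonoidHom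

/-- A *family* of subgroups: a collection closed under conjugation and taking subgroups. -/
def IsFamily (F : Set (Subgroup G)) : Prop :=
  (∀ K ∈ F, ∀ g : G, conjSub g K ∈ F) ∧ (∀ K ∈ F, ∀ L : Subgroup G, L ≤ K → L ∈ F)

/-- `Fix A B` is the set of cosets of `B` in `G` that are fixed by the left translation
action of `A`; it is in canonical bijection with the set of `G`-maps `G/A ⟶ G/B`. -/
def Fix (A B : Subgroup G) : Type :=
  {x : G ⧸ B // ∀ a ∈ A, a • x = x}

namespace Fix

variable {A B C D : Subgroup G}

/-- The action of a `G`-map `G/B ⟶ G/C` on cosets of `B`. -/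
def ap (x : Fix B C) (y : G ⧸ B) : G ⧸ C :=
  Quotient.liftOn' y (fun a => a • x.1) (by
    intro a b hab
    rw [QuotientGroup.leftRel_apply] at hab
    show a • x.1 = b • x.1
    conv_rhs => rw [show b = a * (a⁻¹ * b) by group]
    rw [mul_smul, x.2 _ hab])

@[simp] lemma ap_mk (x : Fix B C) (a : G) : x.ap ((a : G) : G ⧸ B) = a • x.1 := rfl

lemma ap_smul (x : Fix B C) (g : G) (y : G ⧸ B) : x.ap (g • y) = g • x.ap y := by
  induction y using Quotient.inductionOn' with
  | h a =>
    show x.ap (g • ((a : G) : G ⧸ B)) = g • x.ap ((a : G) : G ⧸ B)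
    rw [MulAction.Quotient.smul_mk, ap_mk, ap_mk, smul_eq_mul, mul_smul]

/-- Composition of `G`-maps between coset spaces. -/
def comp (f : Fix A B) (x : Fix B C) : Fix A C :=
  ⟨x.ap f.1, fun a ha => by rw [← ap_smul, f.2 a ha]⟩

/-- The identity `G`-map `G/A ⟶ G/A`. -/
def one (A : Subgroup G) : Fix A A :=
  ⟨((1 : G) : G ⧸ A), fun a ha => by
    show a • ((1 : G) : G ⧸ A) = _
    rw [MulAction.Quotient.smul_mk]
    exact (QuotientGroup.eq).2 (by simpa using ha)⟩

lemma ap_one (y : G ⧸ B) : (one B).ap y = y := by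
  induction y using Quotient.inductionOn' with
  | h a =>
    show (one B).ap ((a : G) : G ⧸ B) = _
    rw [ap_mk]
    show a • ((1 : G) : G ⧸ B) = _
    rw [MulAction.Quotient.smul_mk, smul_eq_mul, mul_one]

lemma ap_ap (g : Fix B C) (h : Fix C D) (y : G ⧸ B) :
    (g.comp h).ap y = h.ap (g.ap y) := by
  induction y using Quotient.inductionOn' with
  | h a =>
    show (g.comp h).ap ((a : G) : G ⧸ B) = h.ap ((g.ap ((a : G) : G ⧸ B)))
    rw [ap_mk, ap_mk, ap_smul]
    rfl

@[simp] lemma one_comp (x : Fix A B) : (one A).comp x = x := by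
  apply Subtype.ext
  show x.ap ((1 : G) : G ⧸ A) = x.1
  rw [ap_mk, one_smul]

@[simp] lemma comp_one (f : Fix A B) : f.comp (one B) = f :=
  Subtype.ext (ap_one f.1)

lemma comp_assoc (f : Fix A B) (g : Fix B C) (h : Fix C D) :
    (f.comp g).comp h = f.comp (g.comp h) :=
  Subtype.ext (ap_ap g h f.1).symm

end Fix

/-- The orbit category `Or_F(G)`: objects are the subgroups in the family `F`
(representing the coset `G`-sets `G/H`), morphisms are the `G`-maps `G/H ⟶ G/K`. -/
structure Obj (G : Type) [Group G] (F : Set (Subgroup G)) : Type where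
  grp : Subgroup G
  mem : grp ∈ F

instance (F : Set (Subgroup G)) : Category (Obj G F) where
  Hom K L := Fix K.grp L.grp
  id K := Fix.one K.grp
  comp f g := f.comp g
  id_comp f := Fix.one_comp f
  comp_id f := Fix.comp_one f
  assoc f g h := Fix.comp_assoc f g h

/-- The category of (right) `RΓ_G`-modules: contravariant functors from the orbit
category `Or_F(G)` to `R`-modules. -/
abbrev OMod (G : Type) [Group G] (R : Type) [CommRing R] (F : Set (Subgroup G)) :=
  (Obj G F)ᵒᵖ ⥤ ModuleCat.{0} R

instance (R : Type) [CommRing R] (F : Set (Subgroup G)) :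
    HasFiniteBiproducts (OMod G R F) :=
  Abelian.hasFiniteBiproducts

variable (R : Type) [CommRing R]

/-- The `RΓ_G`-module `R[(G/L)^?]` sending `G/K` to the free `R`-module on the
`K`-fixed points of `G/L`.  For `L ∈ F` these are exactly the free modules `R[G/L^?]`. -/
noncomputable def stdMod (F : Set (Subgroup G)) (L : Subgroup G) : OMod G R F where
  obj K := ModuleCat.of R (Fix K.unop.grp L →₀ R)
  map {K K'} f := ModuleCat.ofHom (Finsupp.lmapDomain R R (fun x => Fix.comp f.unop x))
  map_id K := by
    have h : (fun x => Fix.comp (𝟙 K).unop x) = (id : Fix K.unop.grp L → Fix K.unop.grp L) :=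
      funext fun x => Fix.one_comp x
    show ModuleCat.ofHom (Finsupp.lmapDomain R R _) = _
    rw [h, Finsupp.lmapDomain_id]
    rfl
  map_comp {K K' K''} f g := by
    have h : (fun x : Fix K.unop.grp L => Fix.comp ((f ≫ g).unop) x) =
        (fun x : Fix K'.unop.grp L => Fix.comp g.unop x) ∘
          (fun x : Fix K.unop.grp L => Fix.comp f.unop x) :=
      funext fun x => (Fix.comp_assoc g.unop f.unop x)
    show ModuleCat.ofHom (Finsupp.lmapDomain R R _) = _
    rw [h, Finsupp.lmapDomain_comp]
    rfl

variable {R}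

/-- A finitely generated free `RΓ_G`-module: a finite direct sum of modules
`R[G/K^?]` with `K ∈ F`. -/
def IsFiniteFree {F : Set (Subgroup G)} (M : OMod G R F) : Prop :=
  ∃ (n : ℕ) (Ks : Fin n → Obj G F),
    Nonempty (M ≅ ⨁ (fun i => stdMod R F (Ks i).grp))

/-- A finitely generated projective `RΓ_G`-module: a direct summand (retract) of a
finitely generated free module. -/
def IsFGProjective {F : Set (Subgroup G)} (M : OMod G R F) : Prop :=
  ∃ N : OMod G R F, IsFiniteFree N ∧ ∃ (s : M ⟶ N) (r : N ⟶ M), s ≫ r = 𝟙 M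

/-- A finitely generated `RΓ_G`-module: admits an epimorphism from a finitely
generated free module. -/
def IsFG {F : Set (Subgroup G)} (M : OMod G R F) : Prop :=
  ∃ N : OMod G R F, IsFiniteFree N ∧ ∃ p : N ⟶ M, Epi p

/-- `P` is a projective resolution of `M` of length `≤ n`, by finitely generated
projective modules:  `0 → P_n → ⋯ → P_0 → M → 0` is exact. -/
def IsFiniteProjRes {F : Set (Subgroup G)} (M : OMod G R F)
    (P : ChainComplex (OMod G R F) ℕ)
    (π : P ⟶ (ChainComplex.single₀ (OMod G R F)).obj M) (n : ℕ) : Prop :=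
  (∀ i, IsFGProjective (P.X i)) ∧ (∀ i, i > n → IsZero (P.X i)) ∧ QuasiIso π

/-- `M` admits a finite projective resolution. -/
def HasFiniteProjRes {F : Set (Subgroup G)} (M : OMod G R F) : Prop :=
  ∃ P π n, IsFiniteProjRes M P π n


section Restriction

variable (H : Subgroup G)

/-- The family of subgroups of `H` induced by a family `F` of subgroups of `G`. -/
def fam (F : Set (Subgroup G)) : Set (Subgroup ↥H) :=
  {K : Subgroup ↥H | K.map H.subtype ∈ F}

/-- The canonical map `H/L → G/L`. -/
def push (L : Subgroup ↥H) : ↥H ⧸ L → G ⧸ (L.map H.subtype) :=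
  Quotient.map' Subtype.val (by
    intro a b hab
    rw [QuotientGroup.leftRel_apply] at hab ⊢
    exact ⟨a⁻¹ * b, hab, rfl⟩)

@[simp] lemma push_mk (L : Subgroup ↥H) (a : ↥H) :
    push H L ((a : ↥H) : ↥H ⧸ L) = ((a : G) : G ⧸ (L.map H.subtype)) := rfl

lemma push_smul (L : Subgroup ↥H) (h : ↥H) (y : ↥H ⧸ L) :
    push H L (h • y) = (h : G) • push H L y := by
  induction y using Quotient.inductionOn' with
  | h a =>
    show push H L (h • ((a : ↥H) : ↥H ⧸ L)) = (h : G) • push H L ((a : ↥H) : ↥H ⧸ L)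
    rw [MulAction.Quotient.smul_mk, push_mk, push_mk, MulAction.Quotient.smul_mk]
    rfl

lemma ap_push {L M : Subgroup ↥H} (g : Fix L M)
    (w : Fix (L.map H.subtype) (M.map H.subtype))
    (hw : w.1 = push H M g.1) (y : ↥H ⧸ L) :
    w.ap (push H L y) = push H M (g.ap y) := by
  induction y using Quotient.inductionOn' with
  | h a =>
    show w.ap (((a : G)) : G ⧸ (L.map H.subtype)) = push H M (g.ap ((a : ↥H) : ↥H ⧸ L))
    rw [Fix.ap_mk, Fix.ap_mk, hw, ← push_smul]

/-- The functor `Or_{F_H}(H) ⥤ Or_F(G)` sending `H/K` to `G/K`. -/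
def toG (F : Set (Subgroup G)) : Obj ↥H (fam H F) ⥤ Obj G F where
  obj K := ⟨K.grp.map H.subtype, K.mem⟩
  map {K L} f := ⟨push H L.grp f.1, by
    rintro g hg
    obtain ⟨k, hk, rfl⟩ := hg
    show ((k : ↥H) : G) • push H L.grp f.1 = push H L.grp f.1
    rw [← push_smul, f.2 k hk]⟩
  map_id K := Subtype.ext (by
    show push H K.grp (((1 : ↥H)) : ↥H ⧸ K.grp) = (((1 : G)) : G ⧸ _)
    rw [push_mk, OneMemClass.coe_one])
  map_comp {K L M} f g := Subtype.ext ((ap_push H g _ rfl f.1).symm)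

/-- The restriction functor `res^G_H` from `RΓ_G`-modules to `RΓ_H`-modules,
given by precomposition with `toG`. -/
def resF (R : Type) [CommRing R] (F : Set (Subgroup G)) (H : Subgroup G) :
    OMod G R F ⥤ OMod ↥H R (fam H F) :=
  (Functor.whiskeringLeft _ _ (ModuleCat.{0} R)).obj (toG H F).op

instance (R : Type) [CommRing R] (F : Set (Subgroup G)) (H : Subgroup G) :
    (resF R F H).Additive where
  map_add {X Y f g} := by
    refine NatTrans.ext (funext fun K => ?_)
    rw [NatTrans.app_add]
    rfl

end Restriction

section Conjugation

lemma mem_normalizer_of_mem_centralizer {Q : Subgroup G} {c : G}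
    (hc : c ∈ Subgroup.centralizer (Q : Set G)) : c ∈ Subgroup.normalizer (Q : Set G) := by
  rw [Subgroup.mem_normalizer_iff]
  intro h
  constructor
  · intro hh
    have hcomm : h * c = c * h := Subgroup.mem_centralizer_iff.mp hc h hh
    have : c * h * c⁻¹ = h := by rw [← hcomm]; group
    rwa [this]
  · intro hh
    have hch : c * h * c⁻¹ ∈ Q := hh
    have hcomm : (c * h * c⁻¹) * c = c * (c * h * c⁻¹) :=
      Subgroup.mem_centralizer_iff.mp hc _ hch
    have h1 : c * h = (c * h * c⁻¹) * c := by group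
    have h4 : c * h = c * (c * h * c⁻¹) := h1.trans hcomm
    have h5 : h = c * h * c⁻¹ := mul_left_cancel h4
    rw [h5]
    exact hch
    
/-- The endomorphism of `G/Q` in the orbit category determined by an element
`n` of the normalizer of `Q`; it sends `gQ` to `g n⁻¹ Q`. -/
def conjMor {F : Set (Subgroup G)} (Q : Obj G F) (n : G) (hn : n ∈ Subgroup.normalizer (Q.grp : Set G)) :
    Q ⟶ Q :=
  ⟨((n⁻¹ : G) : G ⧸ Q.grp), fun q hq => by
    show q • (((n⁻¹ : G)) : G ⧸ Q.grp) = _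
    rw [MulAction.Quotient.smul_mk, smul_eq_mul]
    refine (QuotientGroup.eq).2 ?_
    have : (q * n⁻¹)⁻¹ * n⁻¹ = n * q⁻¹ * n⁻¹ := by group
    rw [this]
    exact (Subgroup.mem_normalizer_iff.mp hn q⁻¹).mp (inv_mem hq)⟩

/-- An `RΓ_G`-module `M` is conjugation invariant if, for every `Q ∈ F`,
the centralizer `C_G(Q)` acts trivially on `M(Q)`. -/
def ConjInv {R : Type} [CommRing R] {F : Set (Subgroup G)} (M : OMod G R F) : Prop :=
  ∀ (Q : Obj G F) (c : G) (hc : c ∈ Subgroup.centralizer (Q.grp : Set G)),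
    M.map (conjMor Q c (mem_normalizer_of_mem_centralizer hc)).op = 𝟙 (M.obj (Opposite.op Q))

/-- A subgroup `H` controls `p`-fusion in `G`. -/
def ControlsPFusion (p : ℕ) (H : Subgroup G) : Prop :=
  ¬ (p ∣ H.index) ∧
    ∀ (Q : Subgroup G) (g : G), Q ≤ H → IsPGroup p ↥Q → conjSub g⁻¹ Q ≤ H →
      ∃ c ∈ Subgroup.centralizer (Q : Set G), ∃ h ∈ H, g = c * h

end Conjugation

section Chains

variable {F : Set (Subgroup G)}

/-- `(A) ≤ (B)` : some conjugate of `A` is contained in `B`. -/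
def classLE (A B : Obj G F) : Prop := ∃ g : G, conjSub g A.grp ≤ B.grp

/-- `(A) < (B)` in the partial order of conjugacy classes of subgroups in `F`. -/
def classLT (A B : Obj G F) : Prop := classLE A B ∧ ¬ classLE B A

/-- A strict chain `(K_0) < (K_1) < ⋯ < (K_l)` of conjugacy classes in `F`. -/
def IsStrictChain {l : ℕ} (c : Fin (l + 1) → Obj G F) : Prop :=
  ∀ i : Fin l, classLT (c i.castSucc) (c i.succ)

end Chains


section Local

lemma spanPrime (p : ℕ) (hp : p.Prime) : (Ideal.span {(p : ℤ)}).IsPrime := by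
  rw [Ideal.span_singleton_prime (by exact_mod_cast hp.ne_zero)]
  exact Nat.prime_iff_prime_int.mp hp

/-- The ring `ℤ_(p)` of `p`-local integers. -/
abbrev zloc (p : ℕ) (hp : p.Prime) : Type :=
  Localization (@Ideal.primeCompl ℤ _ (Ideal.span {(p : ℤ)}) (spanPrime p hp))

instance {R S : Type} [CommRing R] [CommRing S] (f : R →+* S) :
    (ModuleCat.extendScalars.{0,0,0} f).Additive := by
  letI : PreservesColimits (ModuleCat.extendScalars.{0,0,0} f) :=
    (ModuleCat.extendRestrictScalarsAdj f).leftAdjoint_preservesColimits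
  letI := preservesBinaryBiproducts_of_preservesBinaryCoproducts
    (ModuleCat.extendScalars.{0,0,0} f)
  exact Functor.additive_of_preservesBinaryBiproducts _

/-- The `p`-localization functor on `ℤΓ_G`-modules, applying `ℤ_(p) ⊗_ℤ -` objectwise. -/
noncomputable def locF (F : Set (Subgroup G)) (p : ℕ) (hp : p.Prime) :
    OMod G ℤ F ⥤ OMod G (zloc p hp) F :=
  (Functor.whiskeringRight _ _ _).obj (ModuleCat.extendScalars (algebraMap ℤ (zloc p hp)))

instance (F : Set (Subgroup G)) (p : ℕ) (hp : p.Prime) : (locF F p hp).Additive where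
  map_add {X Y f g} := by
    refine NatTrans.ext (funext fun K => ?_)
    show (ModuleCat.extendScalars (algebraMap ℤ (zloc p hp))).map ((f + g).app K) = _
    rw [NatTrans.app_add, Functor.map_add]
    rfl

end Local


instance hasExtOMod (R : Type) [CommRing R] (F : Set (Subgroup G)) :
    HasExt.{1} (OMod G R F) := by
  letI : HasDerivedCategory.{1} (OMod G R F) := HasDerivedCategory.standard _
  exact hasExt_of_hasDerivedCategory.{1} _

end OrbitPaper

open OrbitPaper CategoryTheory

namespace OrbitPaper

/-- The action of the normalizer `N_G(H)` on the `H`-fixed points `(G/K)^H`. -/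
def normAct {G : Type} [Group G] (H K : Subgroup G) (ν : ↥(Subgroup.normalizer (H : Set G))) (x : Fix H K) :
    Fix H K :=
  ⟨(ν : G) • x.1, fun h hh => by
    have h1 : (ν : G)⁻¹ * h * (ν : G) ∈ H :=
      (Subgroup.mem_normalizer_iff''.mp ν.2 h).mp hh
    have h2 : h • (ν : G) • x.1 = (ν : G) • (((ν : G)⁻¹ * h * (ν : G)) • x.1) := by
      rw [smul_smul, smul_smul]
      congr 1
      group
    rw [h2, x.2 _ h1]⟩

end OrbitPaper

/-! `(G/K)^H` is an `N_G(H)`-set, hence the disjoint union of its orbits, each of which is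
the quotient of `N_G(H)` by a point stabilizer. The stabilizer of a fixed coset `gK` is
`N_G(H) ∩ gKg⁻¹`, and two fixed cosets `cK`, `gK` lie in one orbit exactly when `c⁻¹Hc`
and `g⁻¹Hg` are `K`-conjugate. Taking free `R`-modules turns this equivariant bijection into
the required isomorphism. -/

namespace MulAction

variable (M α : Type*) [Group M] [MulAction M α]

theorem exists_fin_orbit_reps [Finite (orbitRel.Quotient M α)] :
    ∃ (n : ℕ) (r : Fin n → α), ∀ x, ∃! i, x ∈ orbit M (r i) := by
  let e := Finite.equivFin (orbitRel.Quotient M α)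
  refine ⟨_, fun i => (e.symm i).out, fun x => ?_⟩
  have hmem : ∀ i, x ∈ orbit M (e.symm i).out ↔ e (Quotient.mk'' x) = i := fun i => by
    rw [← orbitRel_apply, ← Quotient.eq'', Quotient.out_eq', Equiv.eq_symm_apply]
  simp only [hmem, existsUnique_eq']

variable {M α}

theorem exists_sigma_quotient_equiv {ι : Type*} (r : ι → α) (S : ι → Subgroup M)
    (hS : ∀ i, stabilizer M (r i) = S i) (hr : ∀ x, ∃! i, x ∈ orbit M (r i)) :
    ∃ e : (Σ i, M ⧸ S i) ≃ α, ∀ (m : M) (p : Σ i, M ⧸ S i), e ⟨p.1, m • p.2⟩ = m • e p := by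
  obtain rfl : (fun i => stabilizer M (r i)) = S := funext hS
  let F : (Σ i, M ⧸ stabilizer M (r i)) → α := fun p => ofQuotientStabilizer M (r p.1) p.2
  have hF : Function.Bijective F := by
    constructor
    · rintro ⟨i, q⟩ ⟨j, q'⟩ hqq'
      obtain rfl : i = j := (hr (F ⟨i, q⟩)).unique (ofQuotientStabilizer_mem_orbit M _ q)
        (hqq' ▸ ofQuotientStabilizer_mem_orbit M _ q')
      exact congrArg (Sigma.mk i) (injective_ofQuotientStabilizer M (r i) hqq')
    · intro x
      obtain ⟨i, ⟨m, hm⟩, -⟩ := hr x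
      exact ⟨⟨i, m⟩, hm⟩
  exact ⟨Equiv.ofBijective F hF, fun m p => ofQuotientStabilizer_smul M (r p.1) m p.2⟩

end MulAction

theorem Finsupp.domLCongr_mapDomain_of_semiconj {R M α β : Type*} [Semiring R]
    [AddCommMonoid M] [Module R M] (e : α ≃ β) {f : α → α} {g : β → β}
    (h : Function.Semiconj e f g) (φ : α →₀ M) :
    Finsupp.domLCongr (R := R) e (mapDomain f φ) =
      mapDomain g (Finsupp.domLCongr (R := R) e φ) := by
  simp only [domLCongr_apply, domCongr_apply, equivMapDomain_eq_mapDomain,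
    ← mapDomain_comp]
  exact congrArg (mapDomain · φ) (funext h)

namespace OrbitPaper

open Subgroup

variable {G : Type} [Group G] {H K : Subgroup G}

lemma mem_conjSub {g x : G} {S : Subgroup G} : x ∈ conjSub g S ↔ g⁻¹ * x * g ∈ S := by
  rw [conjSub, mem_map_equiv, MulAut.conj_symm_apply]

lemma conjSub_mul (a b : G) (S : Subgroup G) :
    conjSub (a * b) S = conjSub a (conjSub b S) := by
  ext x
  simp only [mem_conjSub, mul_inv_rev, mul_assoc]

lemma conjSub_one (S : Subgroup G) : conjSub 1 S = S := by
  ext x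
  simp [mem_conjSub]

lemma conjSub_eq_self_iff {g : G} : conjSub g H = H ↔ g ∈ normalizer (H : Set G) := by
  rw [mem_normalizer_iff'', SetLike.ext_iff]
  simp only [mem_conjSub, Iff.comm]

lemma conjSub_inv_le_iff {g : G} : conjSub g⁻¹ H ≤ K ↔ H ≤ conjSub g K := by
  simp only [SetLike.le_def, mem_conjSub, inv_inv]
  constructor
  · intro h x hx
    exact h (by rwa [show g * (g⁻¹ * x * g) * g⁻¹ = x by group])
  · exact fun h x hx => by simpa [mul_assoc] using h hx

lemma smul_mk_eq_self_iff {g x : G} : x • (g : G ⧸ K) = g ↔ x ∈ conjSub g K := by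
  rw [MulAction.Quotient.smul_mk, smul_eq_mul, QuotientGroup.eq, mem_conjSub,
    show (x * g)⁻¹ * g = (g⁻¹ * x * g)⁻¹ by group, inv_mem_iff]

lemma forall_smul_mk_eq_self_iff {g : G} :
    (∀ h ∈ H, h • (g : G ⧸ K) = g) ↔ conjSub g⁻¹ H ≤ K := by
  rw [conjSub_inv_le_iff]
  simp only [smul_mk_eq_self_iff, SetLike.le_def]

-- The witnesses correspond via `ν = g k c⁻¹`.
lemma exists_normalizer_smul_mk_eq_iff {c g : G} :
    (∃ ν ∈ normalizer (H : Set G), ν • (c : G ⧸ K) = g) ↔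
      ∃ k ∈ K, conjSub k (conjSub c⁻¹ H) = conjSub g⁻¹ H := by
  simp only [← conjSub_mul]
  constructor
  · rintro ⟨ν, hν, hνc⟩
    rw [MulAction.Quotient.smul_mk, smul_eq_mul, QuotientGroup.eq] at hνc
    refine ⟨g⁻¹ * (ν * c), by simpa using inv_mem hνc, ?_⟩
    rw [show g⁻¹ * (ν * c) * c⁻¹ = g⁻¹ * ν by group, conjSub_mul,
      conjSub_eq_self_iff.2 hν]
  · rintro ⟨k, hk, hkc⟩
    refine ⟨g * k * c⁻¹, ?_, ?_⟩
    · rw [← conjSub_eq_self_iff, show g * k * c⁻¹ = g * (k * c⁻¹) by group, conjSub_mul, hkc,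
        ← conjSub_mul, mul_inv_cancel, conjSub_one]
    · rw [MulAction.Quotient.smul_mk, smul_eq_mul, inv_mul_cancel_right,
        QuotientGroup.mk_mul_of_mem g hk]

instance (H K : Subgroup G) : MulAction (normalizer (H : Set G)) (Fix H K) where
  smul := normAct H K
  one_smul x := Subtype.ext (one_smul G x.1)
  mul_smul ν μ x := Subtype.ext (mul_smul (ν : G) μ x.1)

lemma normalizer_smul_eq_iff {ν : normalizer (H : Set G)} {x y : Fix H K} :
    ν • x = y ↔ (ν : G) • x.1 = y.1 :=
  Subtype.ext_iff

lemma stabilizer_fix {c : G} {x : Fix H K} (hc : (c : G ⧸ K) = x.1) :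
    MulAction.stabilizer (normalizer (H : Set G)) x = (conjSub c K).subgroupOf _ := by
  ext ν
  rw [MulAction.mem_stabilizer_iff, mem_subgroupOf, ← smul_mk_eq_self_iff,
    normalizer_smul_eq_iff, hc]

lemma mem_orbit_fix_iff {c g : G} {x y : Fix H K} (hc : (c : G ⧸ K) = y.1)
    (hg : (g : G ⧸ K) = x.1) :
    x ∈ MulAction.orbit (normalizer (H : Set G)) y ↔
      ∃ k ∈ K, conjSub k (conjSub c⁻¹ H) = conjSub g⁻¹ H := by
  rw [← exists_normalizer_smul_mk_eq_iff, MulAction.mem_orbit_iff, hc, hg]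
  simp only [normalizer_smul_eq_iff, Subtype.exists, exists_prop]

end OrbitPaper

open OrbitPaper

/-- Let `H`, `K` be subgroups of a finite group `G` and `R` a commutative
ring.  As an `R[N_G(H)/H]`-module (equivalently, `N_G(H)`-equivariantly), the free
`R`-module `R[(G/K)^H]` is isomorphic to `⊕ R[N_G(H)/N_{gKg⁻¹}(H)]`, the sum running
over a set `v(H,K)` of representatives of the `K`-conjugacy classes of subgroups of the
form `g⁻¹Hg` contained in `K`.  Here `N_{gKg⁻¹}(H) = N_G(H) ∩ gKg⁻¹`. -/
theorem statement7 (G : Type) [Group G] [Fintype G] (R : Type) [CommRing R]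
    (H K : Subgroup G) :
    ∃ (n : ℕ) (c : Fin n → G) (_ : ∀ i, conjSub (c i)⁻¹ H ≤ K),
      (∀ g : G, conjSub g⁻¹ H ≤ K →
        ∃! i : Fin n, ∃ k ∈ K, conjSub k (conjSub (c i)⁻¹ H) = conjSub g⁻¹ H) ∧
      Nonempty { e : (Fix H K →₀ R) ≃ₗ[R]
            ((Σ i : Fin n,
              (↥(Subgroup.normalizer (H : Set G)) ⧸ ((conjSub (c i) K).subgroupOf (Subgroup.normalizer (H : Set G))))) →₀ R) //
          ∀ (ν : ↥(Subgroup.normalizer (H : Set G))) (φ : Fix H K →₀ R),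
            e (Finsupp.mapDomain (normAct H K ν) φ) =
              Finsupp.mapDomain (fun x => ⟨x.1, ν • x.2⟩) (e φ) } := by
  have : Finite (Fix H K) := Subtype.finite
  obtain ⟨n, r, hr⟩ :=
    MulAction.exists_fin_orbit_reps (Subgroup.normalizer (H : Set G)) (Fix H K)
  let c : Fin n → G := fun i => (r i).1.out
  have hc : ∀ i, (c i : G ⧸ K) = (r i).1 := fun i => QuotientGroup.out_eq' _
  obtain ⟨e, he⟩ := MulAction.exists_sigma_quotient_equiv r _ (fun i => stabilizer_fix (hc i)) hr
  refine ⟨n, c, fun i => forall_smul_mk_eq_self_iff.1 (hc i ▸ (r i).2), fun g hg => ?_,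
    ⟨⟨Finsupp.domLCongr e.symm, fun ν => ?_⟩⟩⟩
  · exact (existsUnique_congr fun i => mem_orbit_fix_iff (hc i) rfl).1
      (hr ⟨g, forall_smul_mk_eq_self_iff.2 hg⟩)
  · refine Finsupp.domLCongr_mapDomain_of_semiconj e.symm fun x => e.injective ?_
    rw [he, Equiv.apply_symm_apply, Equiv.apply_symm_apply]
    rfl
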